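/- arXiv:2212.07215 — 5 statements merged into one kernel-verified Lean document; each statement's English description precedes it below -/
import Mathlib

section
/- Let 1 ≤ m ≤ d and let T be an invertible d×d real matrix. Then the m-th singular value of π∘T, where π : ℝ^d → ℝ^m is the projection onto the first m coordinates, satisfies α_m(π∘T) ≥ α_1(T)^{1−m} · α_d(T)^m. -/
/-!
The min–max principle gives `α_m(π T) ≥ α_d(T)`: the `m`-dimensional subspace
`E = T⁻¹(ℝ^m × 0)` meets every subspace of dimension `d + 1 - m` nontrivially, and for `x ∈ E`
we have `‖π T x‖ = ‖T x‖ ≥ α_d(T) ‖x‖`. Since `0 ≤ α_d(T) ≤ α_1(T)`, the left-hand side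
`α_1^{1-m} α_d^m = α_d (α_d / α_1)^{m-1}` is at most `α_d(T)`.
-/

/-- The `l`-th singular value of an `m × d` real matrix `A`, via the
Courant–Fischer min-max characterization. -/
noncomputable def singVal {m d : ℕ} (A : Matrix (Fin m) (Fin d) ℝ) (l : ℕ) : ℝ :=
  ⨅ V : {V : Submodule ℝ (EuclideanSpace ℝ (Fin d)) // Module.finrank ℝ V = d + 1 - l},
    ⨆ x : {x : EuclideanSpace ℝ (Fin d) // x ∈ V.1 ∧ ‖x‖ = 1}, ‖Matrix.toEuclideanLin A x‖

/-- The coordinate projection `π_{d,m} : ℝ^d → ℝ^m`, `(x_1,...,x_d) ↦ (x_1,...,x_m)`,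
as an `m × d` matrix. -/
def projMat (d m : ℕ) : Matrix (Fin m) (Fin d) ℝ :=
  Matrix.of fun i j => if (i : ℕ) = (j : ℕ) then 1 else 0

lemma zpow_one_sub_mul_zpow_le {K : Type*} [Field K] [LinearOrder K] [IsStrictOrderedRing K]
    {a b : K} (hb : 0 ≤ b) (hba : b ≤ a) {m : ℕ} (hm : 1 ≤ m) :
    a ^ (1 - (m : ℤ)) * b ^ (m : ℤ) ≤ b := by
  rcases hb.eq_or_lt with rfl | hb_pos
  · rw [zero_zpow _ (by omega), mul_zero]
  obtain ⟨n, rfl⟩ := Nat.exists_eq_add_of_le' hm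
  have ha : 0 < a := hb_pos.trans_le hba
  calc a ^ (1 - ((n + 1 : ℕ) : ℤ)) * b ^ ((n + 1 : ℕ) : ℤ) = (b / a) ^ n * b := by
        rw [show 1 - ((n + 1 : ℕ) : ℤ) = -n by push_cast; ring, zpow_neg, zpow_natCast,
          zpow_natCast, div_pow, pow_succ]
        ring
    _ ≤ 1 ^ n * b := by gcongr; exact (div_le_one ha).mpr hba
    _ = b := by rw [one_pow, one_mul]

open Matrix Module

section SingularValues

variable {k d m : ℕ}

lemma singVal_nonneg (A : Matrix (Fin k) (Fin d) ℝ) (l : ℕ) : 0 ≤ singVal A l :=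
  Real.iInf_nonneg fun _ => Real.iSup_nonneg fun _ => norm_nonneg _

lemma bddAbove_range_norm_toEuclideanLin (A : Matrix (Fin k) (Fin d) ℝ)
    (V : Submodule ℝ (EuclideanSpace ℝ (Fin d))) :
    BddAbove (Set.range fun x : {x : EuclideanSpace ℝ (Fin d) // x ∈ V ∧ ‖x‖ = 1} =>
      ‖toEuclideanLin A x‖) := by
  refine ⟨‖LinearMap.toContinuousLinearMap (toEuclideanLin A)‖, ?_⟩
  rintro _ ⟨x, rfl⟩
  simpa [x.2.2] using (LinearMap.toContinuousLinearMap (toEuclideanLin A)).le_opNorm x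

lemma singVal_mul_norm_le (A : Matrix (Fin k) (Fin d) ℝ) (x : EuclideanSpace ℝ (Fin d)) :
    singVal A d * ‖x‖ ≤ ‖toEuclideanLin A x‖ := by
  rcases eq_or_ne x 0 with rfl | hx
  · simp
  have hrank : finrank ℝ (ℝ ∙ x) = d + 1 - d := by rw [finrank_span_singleton hx]; omega
  have hbdd : BddBelow (Set.range fun V : {V : Submodule ℝ (EuclideanSpace ℝ (Fin d)) //
      finrank ℝ V = d + 1 - d} => ⨆ y : {y : EuclideanSpace ℝ (Fin d) // y ∈ V.1 ∧ ‖y‖ = 1},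
        ‖toEuclideanLin A y‖) :=
    ⟨0, by rintro _ ⟨V, rfl⟩; exact Real.iSup_nonneg fun _ => norm_nonneg _⟩
  rw [← le_div_iff₀ (norm_pos_iff.mpr hx)]
  refine (ciInf_le hbdd ⟨ℝ ∙ x, hrank⟩).trans (Real.iSup_le ?_ (by positivity))
  rintro ⟨y, hy, hy1⟩
  obtain ⟨c, rfl⟩ := Submodule.mem_span_singleton.mp hy
  rw [norm_smul, Real.norm_eq_abs] at hy1
  rw [map_smul, norm_smul, Real.norm_eq_abs, eq_inv_of_mul_eq_one_left hy1, inv_mul_eq_div]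

def coordSpan (hk : k ≤ d) : Submodule ℝ (EuclideanSpace ℝ (Fin d)) :=
  Submodule.span ℝ (Set.range fun i : Fin k => EuclideanSpace.single (Fin.castLE hk i) (1 : ℝ))

lemma finrank_coordSpan (hk : k ≤ d) : finrank ℝ (coordSpan hk) = k := by
  rw [coordSpan, finrank_span_eq_card, Fintype.card_fin]
  exact EuclideanSpace.orthonormal_single.linearIndependent.comp _ (Fin.castLE_injective hk)

lemma apply_eq_zero_of_mem_coordSpan (hk : k ≤ d) {x : EuclideanSpace ℝ (Fin d)}
    (hx : x ∈ coordSpan hk) (j : Fin d) (hj : k ≤ (j : ℕ)) : x j = 0 := by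
  obtain ⟨c, rfl⟩ := (Submodule.mem_span_range_iff_exists_fun ℝ).mp hx
  have hne : ∀ i : Fin k, j ≠ Fin.castLE hk i := fun i h => by
    have := congrArg Fin.val h
    simp only [Fin.val_castLE] at this
    omega
  simp [hne]

lemma le_singVal_of_le_norm_on (A : Matrix (Fin k) (Fin d) ℝ) {l : ℕ} (hl : 1 ≤ l)
    (E : Submodule ℝ (EuclideanSpace ℝ (Fin d))) (hE : l ≤ finrank ℝ E) {c : ℝ}
    (hc : ∀ x ∈ E, c * ‖x‖ ≤ ‖toEuclideanLin A x‖) : c ≤ singVal A l := by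
  have hEd : finrank ℝ E ≤ d := (Submodule.finrank_le E).trans_eq finrank_euclideanSpace_fin
  have : Nonempty {V : Submodule ℝ (EuclideanSpace ℝ (Fin d)) // finrank ℝ V = d + 1 - l} :=
    ⟨⟨coordSpan (k := d + 1 - l) (by omega), finrank_coordSpan _⟩⟩
  refine le_ciInf fun ⟨V, hV⟩ => ?_
  have hVE : ¬ Disjoint V E := fun h => by
    have := Submodule.finrank_add_finrank_le_of_disjoint h
    rw [finrank_euclideanSpace_fin] at this
    omega
  obtain ⟨x, hxV, hxE, hx⟩ : ∃ x ∈ V, x ∈ E ∧ x ≠ 0 := by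
    simpa [Submodule.disjoint_def] using hVE
  have hu : ‖‖x‖⁻¹ • x‖ = 1 := norm_smul_inv_norm hx
  calc c = c * ‖‖x‖⁻¹ • x‖ := by rw [hu, mul_one]
    _ ≤ ‖toEuclideanLin A (‖x‖⁻¹ • x)‖ := hc _ (E.smul_mem _ hxE)
    _ ≤ _ := le_ciSup (bddAbove_range_norm_toEuclideanLin A V) ⟨_, V.smul_mem _ hxV, hu⟩

lemma singVal_le_singVal_one (A : Matrix (Fin k) (Fin d) ℝ) (hd : 1 ≤ d) :
    singVal A d ≤ singVal A 1 :=
  le_singVal_of_le_norm_on A le_rfl ⊤ (by rwa [finrank_top, finrank_euclideanSpace_fin])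
    fun x _ => singVal_mul_norm_le A x

lemma toEuclideanLin_projMat_apply (hmd : m ≤ d) (y : EuclideanSpace ℝ (Fin d))
    (i : Fin m) : toEuclideanLin (projMat d m) y i = y (Fin.castLE hmd i) := by
  have hij : ∀ j : Fin d, (i : ℕ) = j ↔ j = Fin.castLE hmd i := fun j => by
    simp [Fin.ext_iff, eq_comm]
  simp [toLpLin_apply, projMat, mulVec, dotProduct, hij]

lemma norm_toEuclideanLin_projMat (hmd : m ≤ d) {y : EuclideanSpace ℝ (Fin d)}
    (hy : ∀ j : Fin d, m ≤ (j : ℕ) → y j = 0) :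
    ‖toEuclideanLin (projMat d m) y‖ = ‖y‖ := by
  simp only [EuclideanSpace.norm_eq, toEuclideanLin_projMat_apply hmd]
  congr 1
  refine Fintype.sum_of_injective _ (Fin.castLE_injective hmd) _ _ (fun j hj => ?_) fun _ => rfl
  rw [hy j (not_lt.mp fun hjm => hj ⟨⟨j, hjm⟩, rfl⟩), norm_zero, sq, zero_mul]

lemma toEuclideanLin_surjective_of_isUnit {𝕜 n : Type*} [RCLike 𝕜] [Fintype n] [DecidableEq n]
    {T : Matrix n n 𝕜} (hT : IsUnit T) : Function.Surjective (toEuclideanLin T) :=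
  (Module.End.isUnit_iff _).mp (hT.map (toLpLinAlgEquiv 2)) |>.surjective

lemma singVal_le_singVal_projMat_mul (hm : 1 ≤ m) (hmd : m ≤ d)
    (T : Matrix (Fin d) (Fin d) ℝ) (hT : IsUnit T) :
    singVal T d ≤ singVal (projMat d m * T) m := by
  set E := (coordSpan hmd).comap (toEuclideanLin T)
  have hE : m ≤ finrank ℝ E := by
    calc m = finrank ℝ (E.map (toEuclideanLin T)) := by
          rw [Submodule.map_comap_eq_of_surjective (toEuclideanLin_surjective_of_isUnit hT),
            finrank_coordSpan]
      _ ≤ finrank ℝ E := Submodule.finrank_map_le _ _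
  refine le_singVal_of_le_norm_on _ hm E hE fun x hx => ?_
  rw [toLpLin_mul_same, LinearMap.comp_apply,
    norm_toEuclideanLin_projMat hmd (apply_eq_zero_of_mem_coordSpan hmd hx)]
  exact singVal_mul_norm_le T x

end SingularValues

/-- For `1 ≤ m ≤ d` and an invertible `d × d` matrix `T`,
`α_m(π ∘ T) ≥ α_1(T)^{1-m} · α_d(T)^m`. -/
theorem singVal_proj_comp_lower_bound {d m : ℕ} (hm : 1 ≤ m) (hmd : m ≤ d)
    (T : Matrix (Fin d) (Fin d) ℝ) (hT : IsUnit T) :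
    singVal T 1 ^ (1 - (m : ℤ)) * singVal T d ^ (m : ℤ) ≤ singVal (projMat d m * T) m :=
  calc singVal T 1 ^ (1 - (m : ℤ)) * singVal T d ^ (m : ℤ) ≤ singVal T d :=
        zpow_one_sub_mul_zpow_le (singVal_nonneg T d) (singVal_le_singVal_one T (hm.trans hmd)) hm
    _ ≤ singVal (projMat d m * T) m := singVal_le_singVal_projMat_mul hm hmd T hT
end

section
/- Let x_1,...,x_k and y_1,...,y_k be two families of linearly independent vectors in ℝ^m. Then the lines spanned by x_1∧...∧x_k and y_1∧...∧y_k in Λ^k ℝ^m coincide if and only if span{x_1,...,x_k} = span{y_1,...,y_k}. -/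
/-!
If `x` is linearly independent, then `u` lies in the span of `x` exactly when
`u ∧ x₁ ∧ ⋯ ∧ xₖ = 0`, because `u, x₁, …, xₖ` is independent otherwise and the wedge of an
independent family is nonzero (a determinant on its span, pulled back along a projection,
detects it). So the span of `x` is recovered from the line through `x₁ ∧ ⋯ ∧ xₖ`. Conversely,
if the spans agree, expanding `y` in the basis `x` of the common span gives
`y₁ ∧ ⋯ ∧ yₖ = det • (x₁ ∧ ⋯ ∧ xₖ)`.
-/

open ExteriorAlgebra Submodule

lemma Module.Basis.map_eq_det_smul {R M N ι : Type*} [CommRing R] [AddCommGroup M] [Module R M]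
    [AddCommGroup N] [Module R N] [Fintype ι] [DecidableEq ι]
    (e : Module.Basis ι R M) (f : M [⋀^ι]→ₗ[R] N) (v : ι → M) : f v = e.det v • f e := by
  suffices f = e.det.smulRight (f e) from congr($this v)
  refine e.ext_alternating fun i hi => ?_
  let σ : Equiv.Perm ι := Equiv.ofBijective i (Finite.injective_iff_bijective.1 hi)
  change f (e ∘ σ) = e.det.smulRight (f e) (e ∘ σ)
  rw [AlternatingMap.smulRight_apply, f.map_perm, e.det.map_perm, e.det_self, smul_one_smul]

section CommRing

variable {R M : Type*} [CommRing R] [AddCommGroup M] [Module R M] {k : ℕ}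

lemma ιMulti_mem_span_singleton_ιMulti_of_span_le {x y : Fin k → M}
    (hx : LinearIndependent R x) (h : span R (Set.range y) ≤ span R (Set.range x)) :
    ιMulti R k y ∈ R ∙ ιMulti R k x := by
  let b := Module.Basis.span hx
  let y' : Fin k → span R (Set.range x) := fun i => ⟨y i, h (subset_span ⟨i, rfl⟩)⟩
  refine mem_span_singleton.2 ⟨b.det y', ?_⟩
  have := b.map_eq_det_smul ((ιMulti R k).compLinearMap (span R (Set.range x)).subtype) y'
  simpa only [AlternatingMap.compLinearMap_apply, subtype_apply, b, Module.Basis.span_apply,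
    eq_comm] using this

end CommRing

section Field

variable {K M : Type*} [Field K] [AddCommGroup M] [Module K M] {k : ℕ}

lemma ιMulti_ne_zero_of_linearIndependent {x : Fin k → M} (hx : LinearIndependent K x) :
    ιMulti K k x ≠ 0 := by
  let W := span K (Set.range x)
  let b := Module.Basis.span hx
  obtain ⟨π, hπ⟩ := W.subtype.exists_leftInverse_of_injective W.ker_subtype
  have hπx : π ∘ x = b := funext fun i => by
    rw [Function.comp_apply, Module.Basis.span_apply]
    exact LinearMap.congr_fun hπ ⟨x i, subset_span ⟨i, rfl⟩⟩
  let f : M [⋀^Fin k]→ₗ[K] K := b.det.compLinearMap π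
  have hfx : f x = 1 := by
    rw [AlternatingMap.compLinearMap_apply]
    exact (congrArg b.det hπx).trans b.det_self
  intro h
  have := congr(liftAlternating (Pi.single k f) $h)
  rw [liftAlternating_apply_ιMulti, Pi.single_eq_same, hfx, map_zero] at this
  exact one_ne_zero this

lemma ι_mul_ιMulti_eq_zero_iff {x : Fin k → M} (hx : LinearIndependent K x) (u : M) :
    ι K u * ιMulti K k x = 0 ↔ u ∈ span K (Set.range x) := by
  have hcons : ι K u * ιMulti K k x = ιMulti K (k + 1) (Fin.cons u x) := by
    rw [ιMulti_succ_apply]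
    rfl
  rw [hcons]
  constructor
  · intro h
    by_contra hu
    exact ιMulti_ne_zero_of_linearIndependent (linearIndependent_finCons.2 ⟨hx, hu⟩) h
  · intro hu
    exact (ιMulti K (k + 1)).map_linearDependent _ fun hi => (linearIndependent_finCons.1 hi).2 hu

lemma mem_span_range_iff_span_ιMulti_le_ker {x : Fin k → M} (hx : LinearIndependent K x)
    (u : M) :
    u ∈ span K (Set.range x) ↔ K ∙ ιMulti K k x ≤ LinearMap.ker (LinearMap.mulLeft K (ι K u)) := by
  rw [span_singleton_le_iff_mem, LinearMap.mem_ker, LinearMap.mulLeft_apply,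
    ι_mul_ιMulti_eq_zero_iff hx]

end Field

/-- Plücker embedding is injective: for linearly independent families `x_1,...,x_k` and
`y_1,...,y_k` in `ℝ^m`, the lines spanned by `x_1∧...∧x_k` and `y_1∧...∧y_k` in `⋀^k ℝ^m`
coincide if and only if `span{x_1,...,x_k} = span{y_1,...,y_k}`. -/
theorem wedge_span_eq_iff_span_eq {m k : ℕ} (x y : Fin k → EuclideanSpace ℝ (Fin m))
    (hx : LinearIndependent ℝ x) (hy : LinearIndependent ℝ y) :
    Submodule.span ℝ {ExteriorAlgebra.ιMulti ℝ k x} =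
        Submodule.span ℝ {ExteriorAlgebra.ιMulti ℝ k y} ↔
      Submodule.span ℝ (Set.range x) = Submodule.span ℝ (Set.range y) := by
  constructor
  · intro h
    ext u
    rw [mem_span_range_iff_span_ιMulti_le_ker hx, mem_span_range_iff_span_ιMulti_le_ker hy, h]
  · intro h
    refine le_antisymm ?_ ?_ <;> rw [span_singleton_le_iff_mem]
    · exact ιMulti_mem_span_singleton_ιMulti_of_span_le hy h.le
    · exact ιMulti_mem_span_singleton_ιMulti_of_span_le hx h.ge
end

section
/- Let X be a topological space, let θ_1 and θ_2 be Borel probability measures on ℝ^m (with m ≥ 1) that are not mutually singular. Then for every ε > 0 there exists a Borel set F ⊆ ℝ^m such that θ_1(F) > 0, θ_2(F) > 0, and the total variation distance between the normalized restrictions (θ_1)_F := θ_1(F)^{-1}·θ_1|_F and (θ_2)_F := θ_2(F)^{-1}·θ_2|_F is less than ε. -/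
/-!
Write `θ₁ = θ₁ₛ + f • θ₂` (Lebesgue decomposition) with `θ₁ₛ` carried by a `θ₂`-null set.
Non-singularity means `θ₂ {0 < f} > 0` off that null set, so for `r > 1` some level set
`F = {r ^ n ≤ f < r ^ (n + 1)}` (off the null set) has positive `θ₂`-mass. On `F` the density
varies by at most the factor `r`, so the normalized restriction of `θ₁` is at most `r` times that
of `θ₂`, which bounds their total variation distance by `2 (r - 1)`.
-/

open MeasureTheory

/-- The total variation distance `‖μ - ν‖_TV = sup{(μ-ν)(E) - (μ-ν)(Eᶜ) : E measurable}`
between two (finite) measures. -/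
noncomputable def tvDist {X : Type*} [MeasurableSpace X] (μ ν : Measure X) : ℝ :=
  ⨆ E : {E : Set X // MeasurableSet E},
    (((μ E.1).toReal - (ν E.1).toReal) - ((μ E.1ᶜ).toReal - (ν E.1ᶜ).toReal))

open Set
open scoped ENNReal ProbabilityTheory

variable {X : Type*} [MeasurableSpace X]

lemma tvDist_le_of_le_smul {μ ν : Measure X} [IsProbabilityMeasure μ] [IsProbabilityMeasure ν]
    {δ : ℝ} (hδ : 0 ≤ δ) (h : μ ≤ ENNReal.ofReal (1 + δ) • ν) : tvDist μ ν ≤ 2 * δ := by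
  refine Real.iSup_le (fun ⟨E, hE⟩ => ?_) (by positivity)
  have hμν : μ.real E ≤ (1 + δ) * ν.real E := by
    have := ENNReal.toReal_mono
      (ENNReal.mul_ne_top ENNReal.ofReal_ne_top (measure_ne_top ν E)) (h E)
    rwa [ENNReal.toReal_mul, ENNReal.toReal_ofReal (by linarith)] at this
  have hν : ν.real E ≤ 1 := measureReal_le_one
  -- for probability measures both terms equal `μ E - ν E`, so the one-sided bound suffices
  change (μ.real E - ν.real E) - (μ.real Eᶜ - ν.real Eᶜ) ≤ 2 * δ
  rw [probReal_compl_eq_one_sub hE, probReal_compl_eq_one_sub hE]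
  nlinarith [measureReal_nonneg (μ := ν) (s := E)]

lemma smul_restrict_le_withDensity_restrict {ν : Measure X} {f : X → ℝ≥0∞} {F : Set X}
    (hF : MeasurableSet F) {a : ℝ≥0∞} (ha : ∀ x ∈ F, a ≤ f x) :
    a • ν.restrict F ≤ (ν.withDensity f).restrict F := by
  rw [restrict_withDensity hF, ← withDensity_const]
  exact withDensity_mono (ae_restrict_of_forall_mem hF ha)

lemma withDensity_restrict_le_smul_restrict {ν : Measure X} {f : X → ℝ≥0∞} {F : Set X}
    (hF : MeasurableSet F) {b : ℝ≥0∞} (hb : ∀ x ∈ F, f x ≤ b) :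
    (ν.withDensity f).restrict F ≤ b • ν.restrict F := by
  rw [restrict_withDensity hF, ← withDensity_const]
  exact withDensity_mono (ae_restrict_of_forall_mem hF hb)

lemma cond_le_smul_cond {μ ν : Measure X} {F : Set X} {a r : ℝ≥0∞} (ha₀ : a ≠ 0) (ha : a ≠ ∞)
    (hlow : a • ν.restrict F ≤ μ.restrict F) (hhigh : μ.restrict F ≤ (a * r) • ν.restrict F) :
    μ[|F] ≤ r • ν[|F] := by
  have hF : a * ν F ≤ μ F := by simpa using hlow univ
  calc μ[|F] = (μ F)⁻¹ • μ.restrict F := rfl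
    _ ≤ (a * ν F)⁻¹ • ((a * r) • ν.restrict F) := by
      intro E
      simp only [Measure.smul_apply, smul_eq_mul]
      exact mul_le_mul' (ENNReal.inv_le_inv.mpr hF) (hhigh E)
    _ = r • ν[|F] := by
      rw [smul_smul, ProbabilityTheory.cond, smul_smul, ENNReal.mul_inv (.inl ha₀) (.inl ha)]
      congr 1
      calc a⁻¹ * (ν F)⁻¹ * (a * r) = a⁻¹ * a * (r * (ν F)⁻¹) := by ring
        _ = r * (ν F)⁻¹ := by rw [ENNReal.inv_mul_cancel ha₀ ha, one_mul]

lemma exists_zpow_levelSet_measure_pos {ν : Measure X} {f : X → ℝ≥0∞} {s : Set X}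
    (hf : ∀ᵐ x ∂ν, f x < ∞) (hs : 0 < ν (s ∩ {x | 0 < f x})) {r : ℝ≥0∞} (hr : 1 < r)
    (hr' : r ≠ ∞) : ∃ n : ℤ, 0 < ν (s ∩ f ⁻¹' Ico (r ^ n) (r ^ (n + 1))) := by
  by_contra! hzero
  refine hs.ne' (measure_mono_null_ae ?_ (measure_iUnion_null fun n => le_zero_iff.mp (hzero n)))
  filter_upwards [hf] with x hx ⟨hxs, hx₀⟩
  obtain ⟨n, hn⟩ := ENNReal.exists_mem_Ico_zpow hx₀.ne' hx.ne hr hr'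
  exact mem_iUnion.mpr ⟨n, hxs, hn⟩

section LebesgueDecomposition

variable {μ ν : Measure X} [μ.HaveLebesgueDecomposition ν]

lemma measure_nullSet_inter_rnDeriv_pos (h : ¬ μ ⟂ₘ ν) :
    0 < ν ((μ.mutuallySingular_singularPart ν).nullSet ∩ {x | 0 < μ.rnDeriv ν x}) := by
  rw [inter_comm, measure_inter_conull (Measure.MutuallySingular.measure_compl_nullSet _),
    pos_iff_ne_zero]
  contrapose! h
  rw [← Measure.rnDeriv_eq_zero]
  exact measure_mono_null (fun x hx => pos_iff_ne_zero.mpr hx) h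

lemma restrict_eq_withDensity_rnDeriv_of_subset_nullSet {t : Set X}
    (ht : t ⊆ (μ.mutuallySingular_singularPart ν).nullSet) :
    μ.restrict t = (ν.withDensity (μ.rnDeriv ν)).restrict t := by
  conv_lhs => rw [← μ.singularPart_add_rnDeriv ν]
  rw [Measure.restrict_add, Measure.restrict_eq_zero.mpr
    (measure_mono_null ht (Measure.MutuallySingular.measure_nullSet _)), zero_add]

lemma exists_cond_le_smul_cond_of_not_mutuallySingular [SigmaFinite μ] (h : ¬ μ ⟂ₘ ν)
    {r : ℝ≥0∞} (hr : 1 < r) (hr_top : r ≠ ∞) :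
    ∃ F, MeasurableSet F ∧ 0 < μ F ∧ 0 < ν F ∧ μ[|F] ≤ r • ν[|F] := by
  have hr₀ : r ≠ 0 := (zero_lt_one.trans hr).ne'
  obtain ⟨n, hn⟩ := exists_zpow_levelSet_measure_pos (μ.rnDeriv_lt_top ν)
    (measure_nullSet_inter_rnDeriv_pos h) hr hr_top
  set F := (μ.mutuallySingular_singularPart ν).nullSet ∩ μ.rnDeriv ν ⁻¹' Ico (r ^ n) (r ^ (n + 1))
  have hF : MeasurableSet F := (Measure.MutuallySingular.measurableSet_nullSet _).inter
    (Measure.measurable_rnDeriv _ _ measurableSet_Ico)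
  have hμF := restrict_eq_withDensity_rnDeriv_of_subset_nullSet (t := F) inter_subset_left
  have hlow : r ^ n • ν.restrict F ≤ μ.restrict F :=
    hμF ▸ smul_restrict_le_withDensity_restrict hF fun x hx => hx.2.1
  have hhigh : μ.restrict F ≤ (r ^ n * r) • ν.restrict F := by
    rw [show r ^ n * r = r ^ (n + 1) by rw [ENNReal.zpow_add hr₀ hr_top, zpow_one]]
    exact hμF ▸ withDensity_restrict_le_smul_restrict hF fun x hx => hx.2.2.le
  have hpow₀ : r ^ n ≠ 0 := (ENNReal.zpow_pos hr₀ hr_top n).ne'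
  have hmass : r ^ n * ν F ≤ μ F := by simpa using hlow univ
  exact ⟨F, hF, (ENNReal.mul_pos hpow₀ hn.ne').trans_le hmass, hn,
    cond_le_smul_cond hpow₀ (ENNReal.zpow_lt_top hr₀ hr_top n).ne hlow hhigh⟩

end LebesgueDecomposition

/-- If `θ₁, θ₂` are Borel probability measures on `ℝ^m` which are not mutually singular,
then for every `ε > 0` there is a Borel set `F` with `θ₁(F) > 0`, `θ₂(F) > 0` and
`d_TV((θ₁)_F, (θ₂)_F) < ε`, where `(θ)_F = θ(F)⁻¹·θ|_F` is the normalized restriction. -/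
theorem exists_set_tvDist_restrict_lt {m : ℕ}
    (θ₁ θ₂ : Measure (EuclideanSpace ℝ (Fin m)))
    [IsProbabilityMeasure θ₁] [IsProbabilityMeasure θ₂]
    (h : ¬ θ₁ ⟂ₘ θ₂) {ε : ℝ} (hε : 0 < ε) :
    ∃ F : Set (EuclideanSpace ℝ (Fin m)), MeasurableSet F ∧ 0 < θ₁ F ∧ 0 < θ₂ F ∧
      tvDist ((θ₁ F)⁻¹ • θ₁.restrict F) ((θ₂ F)⁻¹ • θ₂.restrict F) < ε := by
  have := Measure.haveLebesgueDecomposition_of_sigmaFinite θ₁ θ₂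
  obtain ⟨F, hF, hθ₁F, hθ₂F, hle⟩ := exists_cond_le_smul_cond_of_not_mutuallySingular h
    (ENNReal.one_lt_ofReal.mpr (by linarith : 1 < 1 + ε / 4)) ENNReal.ofReal_ne_top
  have := ProbabilityTheory.cond_isProbabilityMeasure (μ := θ₁) hθ₁F.ne'
  have := ProbabilityTheory.cond_isProbabilityMeasure (μ := θ₂) hθ₂F.ne'
  refine ⟨F, hF, hθ₁F, hθ₂F, ?_⟩
  calc tvDist θ₁[|F] θ₂[|F] ≤ 2 * (ε / 4) := tvDist_le_of_le_smul (by positivity) hle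
    _ < ε := by linarith
end

section
/- Let m ≥ 2, 1 ≤ l < m and ε > 0. Then there exists δ > 0 such that for every line W ∈ Gr_1(m) and every V ∈ Gr_l(m) with κ(W, V^⊥) ≤ δ, the subspace V is within distance ε (in the metric d_{Gr_l}) of some l-dimensional subspace of W^⊥. -/
/-!
A line `L ⊆ Vᗮ` with `‖P_W - P_L‖ ≤ δ` gives `‖P_W P_V‖ ≤ δ`, because `P_L P_V = 0`. So `P_{Wᗮ}`
moves vectors of `V` by at most `δ` times their length, hence is injective on `V`, and
`U = P_{Wᗮ} V ⊆ Wᗮ` has the dimension of `V`. Finally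
`‖P_V - P_U‖ ≤ ‖P_{Uᗮ} P_V‖ + ‖P_{Vᗮ} P_U‖ ≤ δ + 2δ`.
-/

/-- The orthogonal projection onto a subspace `K` of `ℝ^m`, as an endomorphism of `ℝ^m`. -/
noncomputable def projL {m : ℕ} (K : Submodule ℝ (EuclideanSpace ℝ (Fin m))) :
    EuclideanSpace ℝ (Fin m) →L[ℝ] EuclideanSpace ℝ (Fin m) :=
  K.subtypeL.comp K.orthogonalProjectionOnto

/-- `κ(V₁,V₂)`: the infimum over lines `L₁ ⊆ V₁`, `L₂ ⊆ V₂` of the projective distance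
`‖P_{L₁} − P_{L₂}‖_op`. -/
noncomputable def kappa {m : ℕ} (V₁ V₂ : Submodule ℝ (EuclideanSpace ℝ (Fin m))) : ℝ :=
  ⨅ p : {L : Submodule ℝ (EuclideanSpace ℝ (Fin m)) // L ≤ V₁ ∧ Module.finrank ℝ L = 1} ×
      {L : Submodule ℝ (EuclideanSpace ℝ (Fin m)) // L ≤ V₂ ∧ Module.finrank ℝ L = 1},
    ‖projL p.1.1 - projL p.2.1‖

open ContinuousLinearMap

namespace Submodule

variable {𝕜 E : Type*} [RCLike 𝕜] [NormedAddCommGroup E] [InnerProductSpace 𝕜 E]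
  {U V W : Submodule 𝕜 E} [U.HasOrthogonalProjection] [V.HasOrthogonalProjection]
  [W.HasOrthogonalProjection]

theorem norm_starProjection_orthogonal_apply_le (y : E) {v : E} (hv : v ∈ V) :
    ‖Vᗮ.starProjection y‖ ≤ ‖y - v‖ := by
  rw [starProjection_orthogonal_val, starProjection_minimal]
  exact ciInf_le ⟨0, Set.forall_mem_range.2 fun _ => norm_nonneg _⟩ (⟨v, hv⟩ : V)

theorem norm_starProjection_sub_starProjection_le [CompleteSpace E] :
    ‖U.starProjection - V.starProjection‖ ≤
      ‖Vᗮ.starProjection ∘L U.starProjection‖ + ‖Uᗮ.starProjection ∘L V.starProjection‖ := by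
  have hsplit : U.starProjection - V.starProjection =
      star (Vᗮ.starProjection ∘L U.starProjection) - Uᗮ.starProjection ∘L V.starProjection := by
    rw [star_eq_adjoint, adjoint_comp, ← star_eq_adjoint, ← star_eq_adjoint,
      (isSelfAdjoint_starProjection U).star_eq, (isSelfAdjoint_starProjection Vᗮ).star_eq,
      starProjection_orthogonal', starProjection_orthogonal']
    ext x
    simp
  rw [hsplit, ← norm_star (Vᗮ.starProjection ∘L U.starProjection)]
  exact norm_sub_le _ _

theorem norm_starProjection_comp_le_of_le_orthogonal {L : Submodule 𝕜 E}
    [L.HasOrthogonalProjection] (hL : L ≤ Vᗮ) :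
    ‖W.starProjection ∘L V.starProjection‖ ≤ ‖W.starProjection - L.starProjection‖ := by
  have hLV : L.starProjection ∘L V.starProjection = 0 :=
    starProjection_comp_starProjection_eq_zero_iff.2 ((isOrtho_orthogonal_left V).mono_left hL)
  calc ‖W.starProjection ∘L V.starProjection‖
      = ‖(W.starProjection - L.starProjection) ∘L V.starProjection‖ := by
        rw [sub_comp, hLV, sub_zero]
    _ ≤ ‖W.starProjection - L.starProjection‖ * ‖V.starProjection‖ := opNorm_comp_le _ _
    _ ≤ ‖W.starProjection - L.starProjection‖ :=
        mul_le_of_le_one_right (norm_nonneg _) V.starProjection_norm_le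

theorem norm_starProjection_apply_le_of_mem {c : ℝ}
    (hc : ‖W.starProjection ∘L V.starProjection‖ ≤ c) {v : E} (hv : v ∈ V) :
    ‖W.starProjection v‖ ≤ c * ‖v‖ := by
  calc ‖W.starProjection v‖ = ‖(W.starProjection ∘L V.starProjection) v‖ := by
        rw [comp_apply, starProjection_eq_self_iff.2 hv]
    _ ≤ c * ‖v‖ := le_of_opNorm_le _ hc v

theorem one_sub_mul_norm_le_norm_starProjection_orthogonal {c : ℝ}
    (hc : ‖W.starProjection ∘L V.starProjection‖ ≤ c) {v : E} (hv : v ∈ V) :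
    (1 - c) * ‖v‖ ≤ ‖Wᗮ.starProjection v‖ := by
  have hsum : ‖v‖ ≤ ‖W.starProjection v‖ + ‖Wᗮ.starProjection v‖ := by
    conv_lhs => rw [← W.starProjection_add_starProjection_orthogonal v]
    exact norm_add_le _ _
  linarith [norm_starProjection_apply_le_of_mem hc hv]

theorem finrank_map_starProjection_orthogonal
    (hc : ‖W.starProjection ∘L V.starProjection‖ < 1) :
    Module.finrank 𝕜 (V.map (Wᗮ.starProjection : E →ₗ[𝕜] E)) = Module.finrank 𝕜 V := by
  rw [← LinearMap.range_domRestrict, LinearMap.finrank_range_of_inj]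
  refine LinearMap.injective_domRestrict_iff.2 (disjoint_def.2 fun v hv hker => ?_)
  have h := one_sub_mul_norm_le_norm_starProjection_orthogonal (W := W) le_rfl hv
  rw [show Wᗮ.starProjection v = 0 from hker, norm_zero] at h
  exact norm_le_zero_iff.1 (nonpos_of_mul_nonpos_right h (sub_pos.2 hc))

theorem norm_starProjection_orthogonal_comp_le_of_map_le
    (hU : V.map (Wᗮ.starProjection : E →ₗ[𝕜] E) ≤ U) :
    ‖Uᗮ.starProjection ∘L V.starProjection‖ ≤ ‖W.starProjection ∘L V.starProjection‖ := by
  refine opNorm_le_bound _ (norm_nonneg _) fun x => ?_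
  set y := V.starProjection x
  have hy : Wᗮ.starProjection y ∈ U := hU ⟨y, V.starProjection_apply_mem x, rfl⟩
  calc ‖Uᗮ.starProjection y‖ ≤ ‖y - Wᗮ.starProjection y‖ :=
        norm_starProjection_orthogonal_apply_le y hy
    _ = ‖(W.starProjection ∘L V.starProjection) x‖ := by
        rw [starProjection_orthogonal_val, sub_sub_cancel, comp_apply]
    _ ≤ _ := le_opNorm _ x

theorem norm_starProjection_orthogonal_comp_le_of_le_map {c : ℝ}
    (hc : ‖W.starProjection ∘L V.starProjection‖ ≤ c) (hc' : c ≤ 1 / 2)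
    (hU : U ≤ V.map (Wᗮ.starProjection : E →ₗ[𝕜] E)) :
    ‖Vᗮ.starProjection ∘L U.starProjection‖ ≤ 2 * c := by
  have hc0 : 0 ≤ c := (norm_nonneg _).trans hc
  refine opNorm_le_bound _ (by positivity) fun x => ?_
  obtain ⟨v, hv, hvx⟩ := hU (U.starProjection_apply_mem x)
  have hWv : ‖v‖ ≤ 2 * ‖x‖ := by
    have h := one_sub_mul_norm_le_norm_starProjection_orthogonal hc hv
    have : ‖Wᗮ.starProjection v‖ ≤ ‖x‖ := by
      simpa [← hvx] using U.norm_starProjection_apply_le x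
    nlinarith [norm_nonneg v]
  calc ‖(Vᗮ.starProjection ∘L U.starProjection) x‖ ≤ ‖U.starProjection x - v‖ := by
        rw [comp_apply]; exact norm_starProjection_orthogonal_apply_le _ hv
    _ = ‖W.starProjection v‖ := by
        rw [← hvx, ContinuousLinearMap.coe_coe, starProjection_orthogonal_val, sub_sub_cancel_left,
          norm_neg]
    _ ≤ c * ‖v‖ := norm_starProjection_apply_le_of_mem hc hv
    _ ≤ 2 * c * ‖x‖ := by nlinarith

end Submodule

theorem projL_eq_starProjection {m : ℕ} (K : Submodule ℝ (EuclideanSpace ℝ (Fin m))) :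
    projL K = K.starProjection :=
  rfl

theorem norm_projL_comp_le_kappa {m : ℕ} {W V : Submodule ℝ (EuclideanSpace ℝ (Fin m))}
    (hW : Module.finrank ℝ W = 1) (hV : Vᗮ ≠ ⊥) : ‖projL W ∘L projL V‖ ≤ kappa W Vᗮ := by
  obtain ⟨v, hv, hv0⟩ := (Submodule.ne_bot_iff _).1 hV
  have : Nonempty
      ({L : Submodule ℝ (EuclideanSpace ℝ (Fin m)) // L ≤ W ∧ Module.finrank ℝ L = 1} ×
        {L : Submodule ℝ (EuclideanSpace ℝ (Fin m)) // L ≤ Vᗮ ∧ Module.finrank ℝ L = 1}) :=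
    ⟨⟨W, le_rfl, hW⟩, ⟨ℝ ∙ v, (Submodule.span_singleton_le_iff_mem _ _).2 hv,
      finrank_span_singleton hv0⟩⟩
  refine le_ciInf ?_
  rintro ⟨⟨L₁, hL₁W, hL₁⟩, ⟨L₂, hL₂V, -⟩⟩
  obtain rfl : L₁ = W := Submodule.eq_of_le_of_finrank_eq hL₁W (hL₁.trans hW.symm)
  exact Submodule.norm_starProjection_comp_le_of_le_orthogonal hL₂V

theorem exists_delta_close_to_subspace_of_perp_general {m l : ℕ}
    (hlm : l < m) {ε : ℝ} (hε : 0 < ε) :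
    ∃ δ : ℝ, 0 < δ ∧ ∀ W V : Submodule ℝ (EuclideanSpace ℝ (Fin m)),
      Module.finrank ℝ W = 1 → Module.finrank ℝ V = l →
      kappa W Vᗮ ≤ δ →
      ∃ U : Submodule ℝ (EuclideanSpace ℝ (Fin m)),
        U ≤ Wᗮ ∧ Module.finrank ℝ U = l ∧ ‖projL V - projL U‖ < ε := by
  refine ⟨min (ε / 4) (1 / 2), by positivity, fun W V hW hV hκ => ?_⟩
  set δ := min (ε / 4) (1 / 2)
  have hVperp : Vᗮ ≠ ⊥ := by
    rw [Ne, Submodule.orthogonal_eq_bot_iff]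
    rintro rfl
    rw [finrank_top, finrank_euclideanSpace_fin] at hV
    omega
  have hc : ‖W.starProjection ∘L V.starProjection‖ ≤ δ :=
    (norm_projL_comp_le_kappa hW hVperp).trans hκ
  have hδ : δ ≤ 1 / 2 := min_le_right _ _
  set U := V.map (Wᗮ.starProjection : EuclideanSpace ℝ (Fin m) →ₗ[ℝ] EuclideanSpace ℝ (Fin m))
  refine ⟨U, ?_, ?_, ?_⟩
  · rintro _ ⟨v, -, rfl⟩
    exact Wᗮ.starProjection_apply_mem v
  · rw [Submodule.finrank_map_starProjection_orthogonal ((hc.trans hδ).trans_lt (by norm_num)), hV]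
  · rw [projL_eq_starProjection, projL_eq_starProjection]
    calc ‖V.starProjection - U.starProjection‖
        ≤ ‖Uᗮ.starProjection ∘L V.starProjection‖ + ‖Vᗮ.starProjection ∘L U.starProjection‖ :=
          Submodule.norm_starProjection_sub_starProjection_le
      _ ≤ δ + 2 * δ := add_le_add
          ((Submodule.norm_starProjection_orthogonal_comp_le_of_map_le le_rfl).trans hc)
          (Submodule.norm_starProjection_orthogonal_comp_le_of_le_map hc hδ le_rfl)
      _ < ε := by linarith [min_le_left (ε / 4) (1 / 2)]

/-- Let `m ≥ 2`, `1 ≤ l < m`, `ε > 0`. Then there is `δ > 0` such that for every line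
`W ∈ Gr_1(m)` and every `V ∈ Gr_l(m)` with `κ(W, V^⊥) ≤ δ`, the subspace `V` is within
distance `ε` (in the metric `d_{Gr_l}(V,U) = ‖P_V − P_U‖_op`) of some `l`-dimensional
subspace of `W^⊥`. -/
theorem exists_delta_close_to_subspace_of_perp {m l : ℕ} (hm : 2 ≤ m) (hl : 1 ≤ l)
    (hlm : l < m) {ε : ℝ} (hε : 0 < ε) :
    ∃ δ : ℝ, 0 < δ ∧ ∀ W V : Submodule ℝ (EuclideanSpace ℝ (Fin m)),
      Module.finrank ℝ W = 1 → Module.finrank ℝ V = l →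
      kappa W Vᗮ ≤ δ →
      ∃ U : Submodule ℝ (EuclideanSpace ℝ (Fin m)),
        U ≤ Wᗮ ∧ Module.finrank ℝ U = l ∧ ‖projL V - projL U‖ < ε :=
  exists_delta_close_to_subspace_of_perp_general hlm hε
end

section
/- Let (X,F,θ) be a probability space and let D, E be countable measurable partitions of X such that each atom of E meets at most C atoms of D (C ≥ 1). Then for any probability measure ξ on (X,F), |H(θ, D | E) − H(ξ, D | E)| ≤ 1 + d_TV(θ,ξ)·log C, where H(·, D | E) denotes conditional Shannon entropy and d_TV is total variation distance. -/
/-!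
Write `p j i = θ(D i ∩ E j)` and `q j i = ξ(D i ∩ E j)`. Up to the factor `log 2`, `H(θ, D | E)`
is `∑ j, F (p j)`, where `F v = (∑ v) · H(v / ∑ v)`. As a concave, positively homogeneous
function, `F` is superadditive; it is also almost subadditive,
`F (a + b) ≤ F a + F b + (∑ a + ∑ b) log 2`, and `F v ≤ (∑ v) log C` when `v` has at most `C`
nonzero entries. Splitting each column as `p = min p q + (p - q)⁺` and `q = min p q + (q - p)⁺`
gives `F p - F q ≤ (∑ (p - q)⁺) log C + (∑ p) log 2`. Summed over all columns, the excess
`∑ (p - q)⁺` is `θ S - ξ S` for the union `S` of the cells on which `θ` exceeds `ξ`, hence at most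
the total variation distance.
-/

open MeasureTheory

/-- A countable (ℕ-indexed) measurable partition of `X`. -/
def IsCountPartition {X : Type*} [MeasurableSpace X] (D : ℕ → Set X) : Prop :=
  (∀ n, MeasurableSet (D n)) ∧ (∀ i j, i ≠ j → Disjoint (D i) (D j)) ∧ (⋃ n, D n) = Set.univ

/-- The Shannon entropy (base 2) of a measure with respect to a countable partition. -/
noncomputable def entPart {X : Type*} [MeasurableSpace X] (θ : Measure X)
    (D : ℕ → Set X) : ℝ :=
  ∑' n, -((θ (D n)).toReal * Real.logb 2 (θ (D n)).toReal)

/-- The conditional entropy `H(θ, D | E) = Σ_{E'} θ(E')·H(θ_{E'}, D)`, where `θ_{E'}` is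
the normalized restriction of `θ` to the atom `E'`. -/
noncomputable def condEntPart {X : Type*} [MeasurableSpace X] (θ : Measure X)
    (D E : ℕ → Set X) : ℝ :=
  ∑' j, (θ (E j)).toReal * entPart ((θ (E j))⁻¹ • θ.restrict (E j)) D

open Real Finset

section ScaledEntropy

variable {ι : Type*} {s : Finset ι} {a b v : ι → ℝ}

/-- `(∑ v) · H(v / ∑ v)` in nats; the atom `E'` contributes `θ(E') · H(θ_{E'}, D)` of this form
to the conditional entropy. -/
noncomputable def scaledEntropy (s : Finset ι) (v : ι → ℝ) : ℝ :=
  ∑ i ∈ s, (∑ k ∈ s, v k) * negMulLog (v i / ∑ k ∈ s, v k)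

lemma scaledEntropy_eq_sub (hv : ∀ i ∈ s, 0 ≤ v i) :
    scaledEntropy s v = ∑ i ∈ s, negMulLog (v i) - negMulLog (∑ i ∈ s, v i) := by
  rcases (sum_nonneg hv).eq_or_lt with hS | hS
  · have hv0 : ∀ i ∈ s, v i = 0 := (sum_eq_zero_iff_of_nonneg hv).1 hS.symm
    have hent : ∑ i ∈ s, negMulLog (v i) = 0 := sum_eq_zero fun i hi ↦ by simp [hv0 i hi]
    simp [scaledEntropy, ← hS, hent]
  · have hsplit : ∀ i ∈ s, negMulLog (v i) =
        v i / (∑ k ∈ s, v k) * negMulLog (∑ k ∈ s, v k) +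
          (∑ k ∈ s, v k) * negMulLog (v i / ∑ k ∈ s, v k) :=
      fun i _ ↦ by rw [← negMulLog_mul, mul_div_cancel₀ _ hS.ne']
    rw [sum_congr rfl hsplit, sum_add_distrib, ← sum_mul, ← sum_div, div_self hS.ne', one_mul,
      scaledEntropy]
    ring

lemma sum_negMulLog_le (hv : ∀ i ∈ s, 0 ≤ v i) :
    ∑ i ∈ s, negMulLog (v i) ≤ negMulLog (∑ i ∈ s, v i) + (∑ i ∈ s, v i) * log #s := by
  rcases s.eq_empty_or_nonempty with rfl | hs
  · simp
  have hn : (0 : ℝ) < #s := by exact_mod_cast hs.card_pos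
  have hJensen := concaveOn_negMulLog.le_map_sum (t := s) (w := fun _ ↦ (#s : ℝ)⁻¹) (p := v)
    (fun _ _ ↦ by positivity) (by simp [hn.ne']) hv
  have hinv : negMulLog (#s : ℝ)⁻¹ = (#s : ℝ)⁻¹ * log #s := by simp [negMulLog, log_inv]
  simp only [smul_eq_mul, ← mul_sum, negMulLog_mul, hinv] at hJensen
  calc ∑ i ∈ s, negMulLog (v i) = #s * ((#s : ℝ)⁻¹ * ∑ i ∈ s, negMulLog (v i)) := by
        field_simp
    _ ≤ #s * ((∑ i ∈ s, v i) * ((#s : ℝ)⁻¹ * log #s) + (#s : ℝ)⁻¹ * negMulLog (∑ i ∈ s, v i)) := by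
        gcongr
    _ = _ := by field_simp; ring

lemma scaledEntropy_nonneg (hv : ∀ i ∈ s, 0 ≤ v i) : 0 ≤ scaledEntropy s v :=
  sum_nonneg fun i hi ↦ mul_nonneg (sum_nonneg hv) <| negMulLog_nonneg
    (div_nonneg (hv i hi) (sum_nonneg hv)) (div_le_one_of_le₀ (single_le_sum hv hi) (sum_nonneg hv))

lemma scaledEntropy_le (hv : ∀ i ∈ s, 0 ≤ v i) {n : ℕ} (hn : #s ≤ n) :
    scaledEntropy s v ≤ (∑ i ∈ s, v i) * log n := by
  have hlog : log #s ≤ log n := by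
    rcases (#s).eq_zero_or_pos with hs | hs
    · simp [hs, log_natCast_nonneg]
    · exact log_le_log (by exact_mod_cast hs) (by exact_mod_cast hn)
  have := mul_le_mul_of_nonneg_left hlog (sum_nonneg hv)
  rw [scaledEntropy_eq_sub hv]
  linarith [sum_negMulLog_le hv]

lemma negMulLog_add_le {a b : ℝ} (ha : 0 ≤ a) (hb : 0 ≤ b) :
    negMulLog (a + b) ≤ negMulLog a + negMulLog b := by
  have hmono : ∀ x, 0 ≤ x → x ≤ a + b → x * log x ≤ x * log (a + b) := fun x hx hxab ↦ by
    rcases hx.eq_or_lt with rfl | hx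
    · simp
    · exact mul_le_mul_of_nonneg_left (log_le_log hx hxab) hx.le
  simp only [negMulLog]
  linarith [hmono a ha (by linarith), hmono b hb (by linarith)]

/-- The two-term log-sum inequality: concavity of `negMulLog` at the weights `x / (x + y)`,
`y / (x + y)`. -/
lemma mul_negMulLog_div_add_le {a b x y : ℝ} (ha : 0 ≤ a) (hb : 0 ≤ b) (hax : a ≤ x)
    (hby : b ≤ y) :
    x * negMulLog (a / x) + y * negMulLog (b / y) ≤ (x + y) * negMulLog ((a + b) / (x + y)) := by
  rcases (ha.trans hax).eq_or_lt with rfl | hx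
  · obtain rfl : a = 0 := le_antisymm hax ha
    simp
  rcases (hb.trans hby).eq_or_lt with rfl | hy
  · obtain rfl : b = 0 := le_antisymm hby hb
    simp
  have hconc := concaveOn_negMulLog.2 (Set.mem_Ici.2 (div_nonneg ha hx.le))
    (Set.mem_Ici.2 (div_nonneg hb hy.le)) (show 0 ≤ x / (x + y) by positivity)
    (show 0 ≤ y / (x + y) by positivity) (by field_simp)
  have hmix : x / (x + y) * (a / x) + y / (x + y) * (b / y) = (a + b) / (x + y) := by
    field_simp
  rw [smul_eq_mul, smul_eq_mul, smul_eq_mul, smul_eq_mul, hmix] at hconc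
  calc x * negMulLog (a / x) + y * negMulLog (b / y)
      = (x + y) * (x / (x + y) * negMulLog (a / x) + y / (x + y) * negMulLog (b / y)) := by
        field_simp
    _ ≤ (x + y) * negMulLog ((a + b) / (x + y)) := by gcongr

lemma add_scaledEntropy_le (ha : ∀ i ∈ s, 0 ≤ a i) (hb : ∀ i ∈ s, 0 ≤ b i) :
    scaledEntropy s a + scaledEntropy s b ≤ scaledEntropy s (a + b) := by
  have hsum : ∑ i ∈ s, (a + b) i = ∑ i ∈ s, a i + ∑ i ∈ s, b i := sum_add_distrib
  rw [scaledEntropy, scaledEntropy, scaledEntropy, hsum, ← sum_add_distrib]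
  exact sum_le_sum fun i hi ↦
    mul_negMulLog_div_add_le (ha i hi) (hb i hi) (single_le_sum ha hi) (single_le_sum hb hi)

lemma scaledEntropy_add_le (ha : ∀ i ∈ s, 0 ≤ a i) (hb : ∀ i ∈ s, 0 ≤ b i) :
    scaledEntropy s (a + b) ≤
      scaledEntropy s a + scaledEntropy s b + (∑ i ∈ s, (a + b) i) * log 2 := by
  have hab : ∀ i ∈ s, 0 ≤ (a + b) i := fun i hi ↦ add_nonneg (ha i hi) (hb i hi)
  have hcells : ∑ i ∈ s, negMulLog ((a + b) i) ≤ ∑ i ∈ s, (negMulLog (a i) + negMulLog (b i)) :=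
    sum_le_sum fun i hi ↦ negMulLog_add_le (ha i hi) (hb i hi)
  have hmasses := sum_negMulLog_le (s := (univ : Finset (Fin 2)))
    (v := ![∑ i ∈ s, a i, ∑ i ∈ s, b i])
    (by simp [Fin.forall_fin_two, sum_nonneg ha, sum_nonneg hb])
  simp only [Fin.sum_univ_two, Matrix.cons_val_zero, Matrix.cons_val_one, card_univ,
    Fintype.card_fin, Nat.cast_ofNat] at hmasses
  rw [scaledEntropy_eq_sub hab, scaledEntropy_eq_sub ha, scaledEntropy_eq_sub hb]
  simp only [Pi.add_apply, sum_add_distrib] at hcells ⊢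
  linarith

lemma scaledEntropy_sub_le {p q : ι → ℝ} (hp : ∀ i ∈ s, 0 ≤ p i) (hq : ∀ i ∈ s, 0 ≤ q i)
    {n : ℕ} (hn : #s ≤ n) :
    scaledEntropy s p - scaledEntropy s q ≤
      (∑ i ∈ s, (p i - q i)⁺) * log n + (∑ i ∈ s, p i) * log 2 := by
  set r : ι → ℝ := fun i ↦ (p i - q i)⁺
  have hmin : ∀ i, (p - r) i = min (p i) (q i) := fun i ↦ (inf_eq_sub_posPart_sub _ _).symm
  have hm : ∀ i ∈ s, 0 ≤ (p - r) i := fun i hi ↦ (hmin i).symm ▸ le_min (hp i hi) (hq i hi)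
  have hr : ∀ i ∈ s, 0 ≤ r i := fun i _ ↦ posPart_nonneg _
  have hqm : ∀ i ∈ s, 0 ≤ (q - (p - r)) i := fun i _ ↦ by simp [hmin i]
  have hp_split := scaledEntropy_add_le hm hr
  have hq_split := add_scaledEntropy_le hm hqm
  rw [sub_add_cancel] at hp_split
  rw [add_sub_cancel] at hq_split
  linarith [scaledEntropy_le hr hn, scaledEntropy_nonneg hqm]

lemma tsum_scaledEntropy_sub_le {κ : Type*} (T : κ → Finset ι) {p q : κ → ι → ℝ}
    (hp : ∀ j, ∀ i ∈ T j, 0 ≤ p j i) (hq : ∀ j, ∀ i ∈ T j, 0 ≤ q j i) {n : ℕ}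
    (hT : ∀ j, #(T j) ≤ n) (hps : Summable fun j ↦ ∑ i ∈ T j, p j i)
    (hqs : Summable fun j ↦ ∑ i ∈ T j, q j i) :
    ∑' j, scaledEntropy (T j) (p j) - ∑' j, scaledEntropy (T j) (q j) ≤
      (∑' j, ∑ i ∈ T j, (p j i - q j i)⁺) * log n + (∑' j, ∑ i ∈ T j, p j i) * log 2 := by
  have summable_scaledEntropy : ∀ v : κ → ι → ℝ, (∀ j, ∀ i ∈ T j, 0 ≤ v j i) →
      (Summable fun j ↦ ∑ i ∈ T j, v j i) → Summable fun j ↦ scaledEntropy (T j) (v j) :=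
    fun v hv hvs ↦ .of_nonneg_of_le (fun j ↦ scaledEntropy_nonneg (hv j))
      (fun j ↦ scaledEntropy_le (hv j) (hT j)) (hvs.mul_right (log n))
  have hexcess : Summable fun j ↦ ∑ i ∈ T j, (p j i - q j i)⁺ :=
    .of_nonneg_of_le (fun j ↦ sum_nonneg fun i _ ↦ posPart_nonneg _)
      (fun j ↦ sum_le_sum fun i hi ↦ max_le (by linarith [hq j i hi]) (hp j i hi)) hps
  rw [← (summable_scaledEntropy p hp hps).tsum_sub (summable_scaledEntropy q hq hqs),
    ← tsum_mul_right, ← tsum_mul_right, ← (hexcess.mul_right _).tsum_add (hps.mul_right _)]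
  exact ((summable_scaledEntropy p hp hps).sub (summable_scaledEntropy q hq hqs)).tsum_le_tsum
    (fun j ↦ scaledEntropy_sub_le (hp j) (hq j) (hT j))
    ((hexcess.mul_right _).add (hps.mul_right _))

end ScaledEntropy

section Measure

variable {X : Type*} [MeasurableSpace X] {D E : ℕ → Set X}

lemma IsCountPartition.hasSum_measureReal (hD : IsCountPartition D) (μ : Measure X)
    [IsFiniteMeasure μ] : HasSum (fun i ↦ μ.real (D i)) (μ.real Set.univ) := by
  have htotal : ∑' i, μ (D i) = μ Set.univ := by
    rw [← measure_iUnion (fun i j hij ↦ hD.2.1 i j hij) hD.1, hD.2.2]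
  have := ENNReal.hasSum_toReal (htotal ▸ measure_ne_top μ Set.univ)
  rwa [← ENNReal.tsum_toReal_eq fun _ ↦ measure_ne_top _ _, htotal] at this

lemma IsCountPartition.sum_measureReal_eq (hD : IsCountPartition D) (μ : Measure X)
    [IsFiniteMeasure μ] {s : Finset ℕ} (hs : ∀ i ∉ s, μ (D i) = 0) :
    ∑ i ∈ s, μ.real (D i) = μ.real Set.univ :=
  (hasSum_sum_of_ne_finset_zero fun i hi ↦ by simp [measureReal_def, hs i hi]).unique
    (hD.hasSum_measureReal μ)

lemma IsCountPartition.hasSum_sum_measureReal_inter (hD : IsCountPartition D)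
    (hE : IsCountPartition E) (μ : Measure X) [IsFiniteMeasure μ] {T : ℕ → Finset ℕ}
    (hT : ∀ j, ∀ i ∉ T j, D i ∩ E j = ∅) :
    HasSum (fun j ↦ ∑ i ∈ T j, μ.real (D i ∩ E j)) (μ.real Set.univ) := by
  have hcol : ∀ j, ∑ i ∈ T j, μ.real (D i ∩ E j) = μ.real (E j) := fun j ↦ by
    simpa [measureReal_restrict_apply (hD.1 _)] using hD.sum_measureReal_eq (μ.restrict (E j))
      fun i hi ↦ by rw [Measure.restrict_apply (hD.1 i), hT j i hi, measure_empty]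
  simpa only [hcol] using hE.hasSum_measureReal μ

lemma IsCountPartition.measureReal_univ_mul_entPart (hD : IsCountPartition D) (μ : Measure X)
    [IsFiniteMeasure μ] {s : Finset ℕ} (hs : ∀ i ∉ s, μ (D i) = 0) :
    μ.real Set.univ * entPart ((μ Set.univ)⁻¹ • μ) D =
      scaledEntropy s (fun i ↦ μ.real (D i)) / log 2 := by
  have hterm : ∀ i,
      -((((μ Set.univ)⁻¹ • μ) (D i)).toReal * logb 2 (((μ Set.univ)⁻¹ • μ) (D i)).toReal) =
        negMulLog (μ.real (D i) / μ.real Set.univ) / log 2 := fun i ↦ by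
    simp only [Measure.smul_apply, smul_eq_mul, ENNReal.toReal_mul, ENNReal.toReal_inv,
      ← measureReal_def, inv_mul_eq_div, negMulLog, logb]
    ring
  rw [entPart, tsum_congr hterm, tsum_eq_sum (s := s) fun i hi ↦ by simp [measureReal_def, hs i hi],
    scaledEntropy, hD.sum_measureReal_eq μ hs, mul_sum, sum_div]
  simp only [mul_div_assoc]

lemma IsCountPartition.condEntPart_eq (hD : IsCountPartition D) (θ : Measure X)
    [IsFiniteMeasure θ] {T : ℕ → Finset ℕ} (hT : ∀ j, ∀ i ∉ T j, D i ∩ E j = ∅) :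
    condEntPart θ D E = (∑' j, scaledEntropy (T j) (fun i ↦ θ.real (D i ∩ E j))) / log 2 := by
  rw [condEntPart, ← tsum_div_const]
  refine tsum_congr fun j ↦ ?_
  have := hD.measureReal_univ_mul_entPart (θ.restrict (E j)) (s := T j)
    fun i hi ↦ by rw [Measure.restrict_apply (hD.1 i), hT j i hi, measure_empty]
  simp only [Measure.restrict_apply_univ, measureReal_restrict_apply_univ,
    measureReal_restrict_apply (hD.1 _)] at this
  exact this

lemma tvDist_comm (μ ν : Measure X) : tvDist μ ν = tvDist ν μ := by
  let complEquiv : {A : Set X // MeasurableSet A} ≃ {A : Set X // MeasurableSet A} :=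
    ⟨fun A ↦ ⟨A.1ᶜ, A.2.compl⟩, fun A ↦ ⟨A.1ᶜ, A.2.compl⟩, fun A ↦ by simp, fun A ↦ by simp⟩
  rw [tvDist, ← complEquiv.iSup_comp]
  refine iSup_congr fun A ↦ ?_
  simp only [complEquiv, Equiv.coe_fn_mk, compl_compl]
  ring

lemma two_mul_sub_le_tvDist (θ ξ : Measure X) [IsProbabilityMeasure θ] [IsProbabilityMeasure ξ]
    {A : Set X} (hA : MeasurableSet A) : 2 * (θ.real A - ξ.real A) ≤ tvDist θ ξ := by
  have hterm : ∀ B : {B : Set X // MeasurableSet B},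
      (θ B.1).toReal - (ξ B.1).toReal - ((θ B.1ᶜ).toReal - (ξ B.1ᶜ).toReal) =
        2 * (θ.real B.1 - ξ.real B.1) := fun B ↦ by
    simp only [← measureReal_def, probReal_compl_eq_one_sub B.2]
    ring
  refine le_ciSup_of_le ⟨2, ?_⟩ ⟨A, hA⟩ (hterm ⟨A, hA⟩).ge
  rintro _ ⟨B, rfl⟩
  dsimp only
  rw [hterm]
  linarith [measureReal_le_one (μ := θ) (s := B.1), measureReal_nonneg (μ := ξ) (s := B.1)]

lemma sum_posPart_sub_le_tvDist (θ ξ : Measure X) [IsProbabilityMeasure θ]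
    [IsProbabilityMeasure ξ] {κ : Type*} {K : Finset κ} {c : κ → Set X}
    (hc : ∀ k ∈ K, MeasurableSet (c k)) (hdisj : (K : Set κ).PairwiseDisjoint c) :
    ∑ k ∈ K, (θ.real (c k) - ξ.real (c k))⁺ ≤ tvDist θ ξ := by
  set K' := K.filter fun k ↦ 0 < θ.real (c k) - ξ.real (c k)
  have hc' : ∀ k ∈ K', MeasurableSet (c k) := fun k hk ↦ hc k (mem_filter.1 hk).1
  have hdisj' : (K' : Set κ).PairwiseDisjoint c := hdisj.subset (coe_subset.2 (filter_subset _ _))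
  have hsum : ∑ k ∈ K, (θ.real (c k) - ξ.real (c k))⁺ =
      θ.real (⋃ k ∈ K', c k) - ξ.real (⋃ k ∈ K', c k) := by
    rw [measureReal_biUnion_finset hdisj' hc', measureReal_biUnion_finset hdisj' hc',
      ← sum_sub_distrib, sum_filter]
    exact sum_congr rfl fun k _ ↦ posPart_eq_ite_lt
  have hnonneg : 0 ≤ ∑ k ∈ K, (θ.real (c k) - ξ.real (c k))⁺ :=
    sum_nonneg fun k _ ↦ posPart_nonneg _
  have := two_mul_sub_le_tvDist θ ξ (Finset.measurableSet_biUnion K' hc')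
  linarith

lemma IsCountPartition.pairwise_disjoint_inter (hD : IsCountPartition D)
    (hE : IsCountPartition E) :
    Pairwise (Function.onFun Disjoint fun x : (_ : ℕ) × ℕ ↦ D x.2 ∩ E x.1) := by
  rintro ⟨j, i⟩ ⟨j', i'⟩ hne
  by_cases hj : j = j'
  · subst hj
    have hi : i ≠ i' := fun hi ↦ hne (hi ▸ rfl)
    exact (hD.2.1 i i' hi).mono Set.inter_subset_left Set.inter_subset_left
  · exact (hE.2.1 j j' hj).mono Set.inter_subset_right Set.inter_subset_right

lemma condEntPart_sub_le (θ ξ : Measure X) [IsProbabilityMeasure θ] [IsProbabilityMeasure ξ]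
    (hD : IsCountPartition D) (hE : IsCountPartition E) {T : ℕ → Finset ℕ} {n : ℕ}
    (hT : ∀ j, #(T j) ≤ n) (hTD : ∀ j, ∀ i ∉ T j, D i ∩ E j = ∅) :
    condEntPart θ D E - condEntPart ξ D E ≤ 1 + tvDist θ ξ * logb 2 n := by
  have hθ := hD.hasSum_sum_measureReal_inter hE θ hTD
  have hent := tsum_scaledEntropy_sub_le T (fun _ _ _ ↦ measureReal_nonneg)
    (fun _ _ _ ↦ measureReal_nonneg) hT hθ.summable
    (hD.hasSum_sum_measureReal_inter hE ξ hTD).summable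
  rw [hθ.tsum_eq, probReal_univ, one_mul] at hent
  have htv : ∑' j, ∑ i ∈ T j, (θ.real (D i ∩ E j) - ξ.real (D i ∩ E j))⁺ ≤ tvDist θ ξ :=
    Real.tsum_le_of_sum_le (fun j ↦ sum_nonneg fun _ _ ↦ posPart_nonneg _) fun J ↦ by
      rw [sum_sigma']
      exact sum_posPart_sub_le_tvDist θ ξ (fun x _ ↦ (hD.1 x.2).inter (hE.1 x.1))
        ((hD.pairwise_disjoint_inter hE).set_pairwise _)
  have hlog2 : 0 < log 2 := log_pos one_lt_two
  rw [hD.condEntPart_eq θ hTD, hD.condEntPart_eq ξ hTD, ← sub_div, div_le_iff₀ hlog2, logb,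
    add_mul, one_mul, mul_assoc, div_mul_cancel₀ _ hlog2.ne']
  linarith [mul_le_mul_of_nonneg_right htv (log_natCast_nonneg n)]

end Measure

theorem abs_condEntPart_sub_le_general {X : Type*} [MeasurableSpace X] (θ ξ : Measure X)
    [IsProbabilityMeasure θ] [IsProbabilityMeasure ξ]
    (D E : ℕ → Set X) (hD : IsCountPartition D) (hE : IsCountPartition E)
    {C : ℕ}
    (hmeet : ∀ j, {i | (D i ∩ E j).Nonempty}.Finite ∧
      {i | (D i ∩ E j).Nonempty}.ncard ≤ C) :
    |condEntPart θ D E - condEntPart ξ D E| ≤ 1 + tvDist θ ξ * Real.logb 2 C := by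
  let T j := (hmeet j).1.toFinset
  have hT : ∀ j, #(T j) ≤ C := fun j ↦ (Set.ncard_eq_toFinset_card _ (hmeet j).1).symm ▸ (hmeet j).2
  have hTD : ∀ j, ∀ i ∉ T j, D i ∩ E j = ∅ := fun j i hi ↦
    Set.not_nonempty_iff_eq_empty.1 (by simpa [T] using hi)
  rw [abs_sub_le_iff]
  exact ⟨condEntPart_sub_le θ ξ hD hE hT hTD,
    tvDist_comm θ ξ ▸ condEntPart_sub_le ξ θ hD hE hT hTD⟩

/-- Continuity of conditional entropy in total variation: if every atom of `E` meets at
most `C` atoms of `D`, then for probability measures `θ, ξ`,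
`|H(θ, D | E) − H(ξ, D | E)| ≤ 1 + d_TV(θ,ξ)·log₂ C`. -/
theorem abs_condEntPart_sub_le {X : Type*} [MeasurableSpace X] (θ ξ : Measure X)
    [IsProbabilityMeasure θ] [IsProbabilityMeasure ξ]
    (D E : ℕ → Set X) (hD : IsCountPartition D) (hE : IsCountPartition E)
    {C : ℕ} (hC : 1 ≤ C)
    (hmeet : ∀ j, {i | (D i ∩ E j).Nonempty}.Finite ∧
      {i | (D i ∩ E j).Nonempty}.ncard ≤ C) :
    |condEntPart θ D E - condEntPart ξ D E| ≤ 1 + tvDist θ ξ * Real.logb 2 C :=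
  abs_condEntPart_sub_le_general θ ξ D E hD hE hmeet
end
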